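/- Let σ be a bipartite quasi-state and ρ a bipartite quantum state on the same space ℂ^{d_A}⊗ℂ^{d_B}, and let ε ≥ 0. If ‖σ − ρ‖₁ ≤ ε, then N_τ(σ | ρ) ≥ (1 − ε)·N_τ(ρ), where N_τ(ρ) = N_τ(ρ|ρ). -/

import Mathlib

open scoped BigOperators ComplexOrder

noncomputable section

/-- Bipartite matrices on `ℂ^{IA} ⊗ ℂ^{IB}`, indexed by pairs. -/
abbrev BMat (IA IB : Type) : Type := Matrix (IA × IB) (IA × IB) ℂ

/-- Partial transpose on the `B` system: `(X^{T_B})_{(i,j),(k,l)} = X_{(i,l),(k,j)}`. -/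
def ptB {IA IB : Type} (X : BMat IA IB) : BMat IA IB :=
  fun p q => X (p.1, q.2) (q.1, p.2)

/-- Trace norm `‖X‖₁ = tr √(X† X)`. -/
noncomputable def traceNorm {n : Type} [Fintype n] [DecidableEq n]
    (X : Matrix n n ℂ) : ℝ :=
  (((Matrix.posSemidef_conjTranspose_mul_self X).1.eigenvectorUnitary.1 *
    Matrix.diagonal ((fun r : ℝ => (r : ℂ)) ∘ (√·) ∘ (Matrix.posSemidef_conjTranspose_mul_self X).1.eigenvalues) *
    (star (Matrix.posSemidef_conjTranspose_mul_self X).1.eigenvectorUnitary : Matrix n n ℂ)).trace).re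

/-- Operator norm (largest singular value). -/
noncomputable def opNorm {n : Type} [Fintype n] [DecidableEq n] (X : Matrix n n ℂ) : ℝ :=
  ‖Matrix.toEuclideanCLM (𝕜 := ℂ) X‖

/-- Logarithmic negativity `E_N(X) = log₂ ‖X^{T_B}‖₁`. -/
noncomputable def EN {IA IB : Type} [Fintype IA] [Fintype IB] [DecidableEq IA] [DecidableEq IB]
    (X : BMat IA IB) : ℝ :=
  Real.logb 2 (traceNorm (ptB X))

/-- The extension `id_k ⊗ f` of a map on matrices, acting blockwise. -/
def extMap {I J : Type} (f : Matrix I I ℂ → Matrix J J ℂ) (k : ℕ)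
    (M : Matrix (Fin k × I) (Fin k × I) ℂ) : Matrix (Fin k × J) (Fin k × J) ℂ :=
  fun p q => f (fun i i' => M (p.1, i) (q.1, i')) p.2 q.2

/-- A map on matrices is completely positive if all its extensions `id_k ⊗ f`
map positive semidefinite matrices to positive semidefinite matrices. -/
def CompletelyPositive {I J : Type} [Fintype I] [Fintype J]
    (f : Matrix I I ℂ → Matrix J J ℂ) : Prop :=
  ∀ (k : ℕ) (M : Matrix (Fin k × I) (Fin k × I) ℂ), M.PosSemidef → (extMap f k M).PosSemidef

/-- A PPTq operation: a Hermitian-preserving, trace-preserving linear map `N`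
such that `T_{B'} ∘ N ∘ T_B` is completely positive. -/
def IsPPTq {IA IB JA JB : Type} [Fintype IA] [Fintype IB] [Fintype JA] [Fintype JB]
    (N : BMat IA IB →ₗ[ℂ] BMat JA JB) : Prop :=
  (∀ X : BMat IA IB, X.IsHermitian → (N X).IsHermitian) ∧
  (∀ X : BMat IA IB, (N X).trace = X.trace) ∧
  CompletelyPositive (fun X => ptB (N (ptB X)))

/-- A bipartite quasi-state: Hermitian with trace one. -/
def IsQuasiState {IA IB : Type} [Fintype IA] [Fintype IB] (ρ : BMat IA IB) : Prop :=
  ρ.IsHermitian ∧ ρ.trace = 1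

/-- A bipartite quantum state: positive semidefinite with trace one. -/
def IsState {IA IB : Type} [Fintype IA] [Fintype IB] (ρ : BMat IA IB) : Prop :=
  ρ.PosSemidef ∧ ρ.trace = 1

/-- The maximally entangled state `Φ^d = (1/d) ∑_{i,j} |ii⟩⟨jj|`. -/
noncomputable def MES (d : ℕ) : BMat (Fin d) (Fin d) :=
  fun p q => if p.1 = p.2 ∧ q.1 = q.2 then (1 : ℂ) / d else 0

/-- `n`-fold tensor (Kronecker) power, with all `A` factors grouped against all `B` factors. -/
def tensorPow {IA IB : Type} (ρ : BMat IA IB) (n : ℕ) :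
    BMat (Fin n → IA) (Fin n → IB) :=
  fun p q => ∏ i : Fin n, ρ (p.1 i, p.2 i) (q.1 i, q.2 i)

/-- Tensor (Kronecker) product of two bipartite matrices, grouping `A` systems together
and `B` systems together. -/
def tensorMul {IA IB JA JB : Type} (ρ : BMat IA IB) (σ : BMat JA JB) :
    BMat (IA × JA) (IB × JB) :=
  fun p q => ρ (p.1.1, p.2.1) (q.1.1, q.2.1) * σ (p.1.2, p.2.2) (q.1.2, q.2.2)

/-- One-shot exact distillable entanglement under PPTq operations. -/
noncomputable def oneShotDistill {IA IB : Type} [Fintype IA] [Fintype IB]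
    (ρ : BMat IA IB) : ℝ :=
  sSup { x : ℝ | ∃ d : ℕ, 0 < d ∧ x = Real.logb 2 d ∧
    ∃ Λ : BMat IA IB →ₗ[ℂ] BMat (Fin d) (Fin d), IsPPTq Λ ∧ Λ ρ = MES d }

/-- One-shot exact entanglement cost under PPTq operations. -/
noncomputable def oneShotCost {IA IB : Type} [Fintype IA] [Fintype IB]
    (ρ : BMat IA IB) : ℝ :=
  sInf { x : ℝ | ∃ d : ℕ, 0 < d ∧ x = Real.logb 2 d ∧
    ∃ Λ : BMat (Fin d) (Fin d) →ₗ[ℂ] BMat IA IB, IsPPTq Λ ∧ Λ (MES d) = ρ }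

/-- The one-shot distillation error for `n` copies towards `Φ^d`, optimized over PPTq operations. -/
noncomputable def distillErr {IA IB : Type} [Fintype IA] [Fintype IB]
    [DecidableEq IA] [DecidableEq IB] (ρ : BMat IA IB) (n d : ℕ) : ℝ :=
  sInf { e : ℝ | ∃ Λ : BMat (Fin n → IA) (Fin n → IB) →ₗ[ℂ] BMat (Fin d) (Fin d),
    IsPPTq Λ ∧ e = traceNorm (Λ (tensorPow ρ n) - MES d) }

/-- The one-shot dilution error for preparing `n` copies from `Φ^d`, optimized over PPTq operations. -/
noncomputable def costErr {IA IB : Type} [Fintype IA] [Fintype IB]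
    [DecidableEq IA] [DecidableEq IB] (ρ : BMat IA IB) (n d : ℕ) : ℝ :=
  sInf { e : ℝ | ∃ Λ : BMat (Fin d) (Fin d) →ₗ[ℂ] BMat (Fin n → IA) (Fin n → IB),
    IsPPTq Λ ∧ e = traceNorm (tensorPow ρ n - Λ (MES d)) }

/-- Distillable entanglement under PPTq operations (asymptotically vanishing error). -/
noncomputable def EDppt {IA IB : Type} [Fintype IA] [Fintype IB]
    [DecidableEq IA] [DecidableEq IB] (ρ : BMat IA IB) : ℝ :=
  sSup { r : ℝ | Filter.Tendsto (fun n : ℕ => distillErr ρ n (2 ^ ⌊r * n⌋₊))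
    Filter.atTop (nhds 0) }

/-- Entanglement cost under PPTq operations (asymptotically vanishing error). -/
noncomputable def ECppt {IA IB : Type} [Fintype IA] [Fintype IB]
    [DecidableEq IA] [DecidableEq IB] (ρ : BMat IA IB) : ℝ :=
  sInf { r : ℝ | Filter.Tendsto (fun n : ℕ => costErr ρ n (2 ^ ⌈r * n⌉₊))
    Filter.atTop (nhds 0) }

/-- Tempered negativity `N_τ(σ | ρ)`. -/
noncomputable def temperedNeg {IA IB : Type} [Fintype IA] [Fintype IB]
    [DecidableEq IA] [DecidableEq IB] (σ ρ : BMat IA IB) : ℝ :=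
  sSup { t : ℝ | ∃ X : Matrix (IA × IB) (IA × IB) ℂ, X.IsHermitian ∧
    opNorm (ptB X) ≤ 1 ∧ (X * ρ).trace = (opNorm X : ℂ) ∧ (X * σ).trace = (t : ℂ) }

/-- Asymptotic exact conversion rate under PPTq operations. -/
noncomputable def convRate {IA IB JA JB : Type} [Fintype IA] [Fintype IB]
    [Fintype JA] [Fintype JB]
    (ρ : BMat IA IB) (σ : BMat JA JB) : ℝ :=
  sSup { r : ℝ | 0 ≤ r ∧ ∀ᶠ n : ℕ in Filter.atTop,
    ∃ Λ : BMat (Fin n → IA) (Fin n → IB) →ₗ[ℂ]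
          BMat (Fin ⌊r * n⌋₊ → JA) (Fin ⌊r * n⌋₊ → JB),
      IsPPTq Λ ∧ Λ (tensorPow ρ n) = tensorPow σ ⌊r * n⌋₊ }


/-!
A witness `X` for `N_τ(ρ)` satisfies `tr(Xρ) = ‖X‖_∞`, and by Hölder's inequality
`|tr(X(σ - ρ))| ≤ ‖X‖_∞ ‖σ - ρ‖₁ ≤ ε ‖X‖_∞`. Hence `tr(Xσ) ≥ (1 - ε) ‖X‖_∞`, and since `X` is
also a witness for `N_τ(σ | ρ)`, taking suprema gives the claim. Hölder's inequality comes from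
diagonalising the Hermitian matrix `σ - ρ`: the diagonal entries of `X` conjugated by a unitary
are bounded by `‖X‖_∞`.
-/

open scoped Matrix.Norms.L2Operator

lemma Real.mul_sSup_le {S : Set ℝ} {a b : ℝ} (hS : ∀ t ∈ S, 0 ≤ t) (hb : 0 ≤ b)
    (h : ∀ t ∈ S, a * t ≤ b) : a * sSup S ≤ b := by
  rcases le_or_gt 0 a with ha | ha
  · rw [← smul_eq_mul, ← Real.sSup_smul_of_nonneg ha]
    exact Real.sSup_le (by rintro _ ⟨t, ht, rfl⟩; exact h t ht) hb
  · nlinarith [Real.sSup_nonneg hS]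

namespace Matrix

variable {𝕜 : Type*} [RCLike 𝕜] {n : Type*} [Fintype n]

lemma IsHermitian.ofReal_re_trace_mul {A B : Matrix n n 𝕜} (hA : A.IsHermitian)
    (hB : B.IsHermitian) : (RCLike.re (A * B).trace : 𝕜) = (A * B).trace := by
  refine RCLike.conj_eq_iff_re.mp ?_
  rw [← RCLike.star_def, ← trace_conjTranspose, conjTranspose_mul, hA.eq, hB.eq, trace_mul_comm]

lemma norm_trace_mul_le_of_norm_apply_le {A B : Matrix n n 𝕜} {c : ℝ}
    (hA : ∀ i j, ‖A i j‖ ≤ c) : ‖(A * B).trace‖ ≤ c * ∑ i, ∑ j, ‖B j i‖ := by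
  simp only [trace, diag, mul_apply, Finset.mul_sum]
  refine (norm_sum_le _ _).trans (Finset.sum_le_sum fun i _ => ?_)
  refine (norm_sum_le _ _).trans (Finset.sum_le_sum fun j _ => ?_)
  rw [norm_mul]
  exact mul_le_mul_of_nonneg_right (hA i j) (norm_nonneg _)

variable [DecidableEq n]

lemma norm_apply_le_l2_opNorm (A : Matrix n n 𝕜) (i j : n) : ‖A i j‖ ≤ ‖A‖ := by
  calc ‖A i j‖ = ‖toEuclideanCLM (𝕜 := 𝕜) A (EuclideanSpace.single j 1) i‖ := by
        simp [EuclideanSpace.single, mulVec_single]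
    _ ≤ ‖toEuclideanCLM (𝕜 := 𝕜) A (EuclideanSpace.single j 1)‖ := PiLp.norm_apply_le _ _
    _ ≤ ‖A‖ := by
        simpa [cstar_norm_def] using
          (toEuclideanCLM (𝕜 := 𝕜) A).le_opNorm (EuclideanSpace.single j 1)

lemma norm_trace_mul_diagonal_le (A : Matrix n n 𝕜) (v : n → 𝕜) :
    ‖(A * diagonal v).trace‖ ≤ ‖A‖ * ∑ i, ‖v i‖ := by
  rw [Finset.mul_sum]
  refine (norm_sum_le _ _).trans (Finset.sum_le_sum fun i _ => ?_)
  simpa [norm_mul] using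
    mul_le_mul_of_nonneg_right (norm_apply_le_l2_opNorm A i i) (norm_nonneg (v i))

lemma IsHermitian.norm_trace_mul_le {M : Matrix n n 𝕜} (hM : M.IsHermitian) (X : Matrix n n 𝕜) :
    ‖(X * M).trace‖ ≤ ‖X‖ * ∑ i, |hM.eigenvalues i| := by
  set U := hM.eigenvectorUnitary
  have hconj : ‖star (U : Matrix n n 𝕜) * X * (U : Matrix n n 𝕜)‖ = ‖X‖ := by
    rw [← Unitary.coe_star, CStarRing.norm_mul_coe_unitary, CStarRing.norm_coe_unitary_mul]
  have htrace : (X * M).trace =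
      (star (U : Matrix n n 𝕜) * X * (U : Matrix n n 𝕜) *
        diagonal (RCLike.ofReal ∘ hM.eigenvalues)).trace := by
    conv_lhs => rw [hM.spectral_theorem, Unitary.conjStarAlgAut_apply]
    rw [← Matrix.mul_assoc, ← Matrix.mul_assoc, trace_mul_cycle]
    simp only [Matrix.mul_assoc, U]
  simpa [htrace, hconj] using norm_trace_mul_diagonal_le
    (star (U : Matrix n n 𝕜) * X * (U : Matrix n n 𝕜)) (RCLike.ofReal ∘ hM.eigenvalues)

lemma IsHermitian.trace_cfc {A : Matrix n n 𝕜} (hA : A.IsHermitian) (f : ℝ → ℝ) :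
    (cfc f A).trace = ∑ i, (f (hA.eigenvalues i) : 𝕜) := by
  rw [hA.cfc_eq, IsHermitian.cfc, Unitary.conjStarAlgAut_apply, trace_mul_cycle,
    Unitary.coe_star_mul_self, Matrix.one_mul, trace_diagonal]
  rfl

end Matrix

section TemperedNegativity

open Matrix

variable {n : Type} [Fintype n] [DecidableEq n]

lemma traceNorm_eq_re_trace_cfc_sqrt (X : Matrix n n ℂ) :
    traceNorm X = ((cfc Real.sqrt (Xᴴ * X)).trace).re := by
  rw [(posSemidef_conjTranspose_mul_self X).1.cfc_eq]
  rfl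

lemma Matrix.IsHermitian.traceNorm_eq_sum_abs_eigenvalues {M : Matrix n n ℂ}
    (hM : M.IsHermitian) : traceNorm M = ∑ i, |hM.eigenvalues i| := by
  have hsqrt : cfc Real.sqrt (Mᴴ * M) = cfc (fun x : ℝ => |x|) M := by
    rw [hM.eq, ← sq, ← cfc_pow_id (R := ℝ) M 2 hM.isSelfAdjoint, ← cfc_comp' Real.sqrt (· ^ 2) M]
    exact cfc_congr fun x _ => Real.sqrt_sq_eq_abs x
  rw [traceNorm_eq_re_trace_cfc_sqrt, hsqrt, hM.trace_cfc, Complex.re_sum]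
  exact Finset.sum_congr rfl fun i _ => Complex.ofReal_re _

lemma norm_trace_mul_le_opNorm_mul_traceNorm (X : Matrix n n ℂ) {M : Matrix n n ℂ}
    (hM : M.IsHermitian) : ‖(X * M).trace‖ ≤ opNorm X * traceNorm M := by
  rw [hM.traceNorm_eq_sum_abs_eigenvalues]
  exact hM.norm_trace_mul_le X

lemma one_sub_mul_opNorm_le_re_trace {σ ρ X : Matrix n n ℂ} {ε : ℝ}
    (hσρ : (σ - ρ).IsHermitian) (hρX : (X * ρ).trace = opNorm X) (h : traceNorm (σ - ρ) ≤ ε) :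
    (1 - ε) * opNorm X ≤ ((X * σ).trace).re := by
  have hsplit : (X * σ).trace = opNorm X + (X * (σ - ρ)).trace := by
    rw [Matrix.mul_sub, trace_sub, hρX, add_sub_cancel]
  have hdev : ‖(X * (σ - ρ)).trace‖ ≤ opNorm X * ε :=
    (norm_trace_mul_le_opNorm_mul_traceNorm X hσρ).trans
      (mul_le_mul_of_nonneg_left h (norm_nonneg _))
  rw [hsplit, Complex.add_re, Complex.ofReal_re]
  linarith [neg_abs_le ((X * (σ - ρ)).trace).re, Complex.abs_re_le_norm ((X * (σ - ρ)).trace)]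

@[simp]
lemma ptB_zero {IA IB : Type} : ptB (0 : BMat IA IB) = 0 := rfl

variable {IA IB : Type} [Fintype IA] [Fintype IB] [DecidableEq IA] [DecidableEq IB]

lemma norm_apply_le_opNorm_ptB (X : BMat IA IB) (p q : IA × IB) : ‖X p q‖ ≤ opNorm (ptB X) :=
  (ptB X).norm_apply_le_l2_opNorm (p.1, q.2) (q.1, p.2)

lemma le_temperedNeg {σ ρ X : BMat IA IB} (hX : X.IsHermitian) (hXB : opNorm (ptB X) ≤ 1)
    (hρX : (X * ρ).trace = opNorm X) {t : ℝ} (hσX : (X * σ).trace = t) :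
    t ≤ temperedNeg σ ρ := by
  -- `temperedNeg` is a real `sSup`, so the feasible values must be bounded: every entry of a
  -- feasible `Y` is an entry of `ptB Y`, hence of modulus at most `1`.
  refine le_csSup ⟨∑ p, ∑ q, ‖σ q p‖, ?_⟩ ⟨X, hX, hXB, hρX, hσX⟩
  rintro s ⟨Y, -, hYB, -, hσY⟩
  calc s ≤ ‖(Y * σ).trace‖ := by rw [hσY, Complex.norm_real]; exact le_abs_self s
    _ ≤ 1 * ∑ p, ∑ q, ‖σ q p‖ :=
      norm_trace_mul_le_of_norm_apply_le fun p q => (norm_apply_le_opNorm_ptB Y p q).trans hYB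
    _ = ∑ p, ∑ q, ‖σ q p‖ := one_mul _

lemma temperedNeg_nonneg (σ ρ : BMat IA IB) : 0 ≤ temperedNeg σ ρ :=
  le_temperedNeg (X := 0) isHermitian_zero (by simp [opNorm]) (by simp [opNorm]) (by simp)

end TemperedNegativity

theorem temperedNeg_ge_of_close_general {dA dB : ℕ}
    (σ ρ : BMat (Fin dA) (Fin dB)) (hσ : IsQuasiState σ) (hρ : IsState ρ)
    (ε : ℝ) (h : traceNorm (σ - ρ) ≤ ε) :
    (1 - ε) * temperedNeg ρ ρ ≤ temperedNeg σ ρ := by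
  have hvalue : ∀ {X : BMat (Fin dA) (Fin dB)} {t : ℝ},
      (X * ρ).trace = opNorm X → (X * ρ).trace = t → t = opNorm X := fun hρX hρt => by
    exact_mod_cast hρt.symm.trans hρX
  refine Real.mul_sSup_le ?_ (temperedNeg_nonneg σ ρ) ?_
  · rintro t ⟨X, -, -, hρX, hρt⟩
    exact hvalue hρX hρt ▸ norm_nonneg _
  · rintro t ⟨X, hX, hXB, hρX, hρt⟩
    rw [hvalue hρX hρt]
    exact (one_sub_mul_opNorm_le_re_trace (hσ.1.sub hρ.1.1) hρX h).trans
      (le_temperedNeg hX hXB hρX (hX.ofReal_re_trace_mul hσ.1).symm)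

/-- If `‖σ − ρ‖₁ ≤ ε`, then `N_τ(σ | ρ) ≥ (1 − ε)·N_τ(ρ)`. -/
theorem temperedNeg_ge_of_close {dA dB : ℕ}
    (σ ρ : BMat (Fin dA) (Fin dB)) (hσ : IsQuasiState σ) (hρ : IsState ρ)
    (ε : ℝ) (hε : 0 ≤ ε) (h : traceNorm (σ - ρ) ≤ ε) :
    (1 - ε) * temperedNeg ρ ρ ≤ temperedNeg σ ρ :=
  temperedNeg_ge_of_close_general σ ρ hσ hρ ε h

end
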